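/- Let f : ℝ² → ℝ be smooth and G-invariant, with Fourier coefficients α_n(q) = 2∫_{-1/2}^{1/2} f(uq,q) cos(2nπu) du. Then for every i ≥ 0, k ≥ 1, and M > 0, there is a constant K (independent of n) such that |α_n^{(i)}(q)/q^k| ≤ K/n^k for all q with |q| < M, q ≠ 0. -/

import Mathlib

open Real Set
open scoped ContDiff

/-!
The map `u ↦ f (u q, q)` is `1`-periodic, so integrating by parts twice against `cos (2nπu)`
produces no boundary terms and gains a factor `-(2nπ)⁻²`, while each `u`-derivative brings out a
factor `q`. After `2r` integrations by parts,
`α_n(q) = 2 (-(2nπ)⁻²)^r ∫ q^(2r) B(u, q) cos (2nπu) du` with `B` smooth. Differentiating `i`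
times in `q` under the integral leaves `q^(2r-i)` times an integral that is bounded uniformly in
`n` and in `|q| ≤ M`. Taking `r = k + i` gives `q^k · O(n^(-k))`.
-/

section LineDerivative

variable {E F : Type*} [NormedAddCommGroup E] [NormedSpace ℝ E]
  [NormedAddCommGroup F] [NormedSpace ℝ F]

theorem iteratedDeriv_comp_add_smul {k : ℕ} {f : E → F} (hf : ContDiff ℝ k f) (x y : E) :
    iteratedDeriv k (fun s : ℝ => f (x + s • y)) =
      fun t => iteratedFDeriv ℝ k f (x + t • y) (fun _ => y) := by
  induction k with
  | zero => ext t; simp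
  | succ k ih =>
    ext t
    rw [iteratedDeriv_succ, ih (hf.of_le (by norm_cast; omega))]
    exact hf.contDiffAt.deriv_fderiv_add_smul

end LineDerivative

section Partial

variable {F : Type*} [NormedAddCommGroup F] [NormedSpace ℝ F]

theorem iteratedDeriv_comp_fst {k : ℕ} {f : ℝ × ℝ → F} (hf : ContDiff ℝ k f) (p q : ℝ) :
    iteratedDeriv k (fun p => f (p, q)) p =
      iteratedFDeriv ℝ k f (p, q) (fun _ => (1, 0)) := by
  simpa using congrFun (iteratedDeriv_comp_add_smul hf (0, q) (1, 0)) p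

theorem iteratedDeriv_comp_snd {k : ℕ} {f : ℝ × ℝ → F} (hf : ContDiff ℝ k f) (p q : ℝ) :
    iteratedDeriv k (fun q => f (p, q)) q =
      iteratedFDeriv ℝ k f (p, q) (fun _ => (0, 1)) := by
  simpa using congrFun (iteratedDeriv_comp_add_smul hf (p, 0) (0, 1)) q

end Partial

section ParametricIntegral

variable {E : Type*} [NormedAddCommGroup E] [NormedSpace ℝ E]

theorem hasDerivAt_intervalIntegral_of_continuous {G G' : ℝ × ℝ → E} (hG : Continuous G)
    (hG' : Continuous G') (hderiv : ∀ u q, HasDerivAt (fun q => G (u, q)) (G' (u, q)) q)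
    (a b q : ℝ) :
    HasDerivAt (fun q => ∫ u in a..b, G (u, q)) (∫ u in a..b, G' (u, q)) q := by
  obtain ⟨C, hC⟩ := ((isCompact_uIcc (a := a) (b := b)).prod
    (isCompact_closedBall q 1)).exists_bound_of_continuousOn hG'.continuousOn
  have hsection : ∀ {H : ℝ × ℝ → E}, Continuous H → ∀ q, Continuous fun u => H (u, q) :=
    fun hH q => hH.comp (continuous_id.prodMk continuous_const)
  refine (intervalIntegral.hasDerivAt_integral_of_dominated_loc_of_deriv_le
    (bound := fun _ => C) (Metric.closedBall_mem_nhds q one_pos)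
    (.of_forall fun q => (hsection hG q).aestronglyMeasurable)
    ((hsection hG q).intervalIntegrable a b) (hsection hG' q).aestronglyMeasurable
    (.of_forall fun u hu x hx => hC (u, x) ⟨uIoc_subset_uIcc hu, hx⟩)
    intervalIntegrable_const (.of_forall fun u _ x _ => hderiv u x)).2

theorem iteratedDeriv_intervalIntegral {H : ℝ × ℝ → E} (hH : ContDiff ℝ ∞ H) (a b : ℝ)
    (i : ℕ) :
    iteratedDeriv i (fun q => ∫ u in a..b, H (u, q)) =
      fun q => ∫ u in a..b, iteratedDeriv i (fun q => H (u, q)) q := by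
  have hderivs : ∀ j : ℕ,
      Continuous fun x : ℝ × ℝ => iteratedDeriv j (fun q => H (x.1, q)) x.2 := by
    intro j
    simp_rw [iteratedDeriv_comp_snd (hH.of_le ENat.LEInfty.out)]
    have := hH.continuous_iteratedFDeriv (m := j) ENat.LEInfty.out
    fun_prop
  induction i with
  | zero => simp
  | succ i ih =>
    ext q
    rw [iteratedDeriv_succ, ih]
    refine (hasDerivAt_intervalIntegral_of_continuous (hderivs i) (hderivs (i + 1))
      (fun u q => ?_) a b q).deriv
    rw [iteratedDeriv_succ]
    exact (((hH.comp (contDiff_const.prodMk contDiff_id)).differentiable_iteratedDeriv i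
      (by exact_mod_cast WithTop.coe_lt_top _)) q).hasDerivAt

end ParametricIntegral

theorem exists_contDiff_iteratedDeriv_pow_mul {B : ℝ × ℝ → ℝ} (hB : ContDiff ℝ ∞ B) {i s : ℕ}
    (his : i ≤ s) : ∃ B' : ℝ × ℝ → ℝ, ContDiff ℝ ∞ B' ∧
      ∀ u q, iteratedDeriv i (fun q => q ^ s * B (u, q)) q = q ^ (s - i) * B' (u, q) := by
  induction i generalizing s B with
  | zero => exact ⟨B, hB, fun u q => by simp⟩
  | succ i ih =>
    obtain ⟨s, rfl⟩ : ∃ s', s = s' + 1 := ⟨s - 1, by omega⟩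
    set dB : ℝ × ℝ → ℝ := fun x => fderiv ℝ B x (0, 1)
    have hdB : ContDiff ℝ ∞ dB := (hB.fderiv_right le_rfl).clm_apply contDiff_const
    have hderiv : ∀ u q, HasDerivAt (fun q => B (u, q)) (dB (u, q)) q := fun u q =>
      ((hB.differentiable (by simp)) (u, q)).hasFDerivAt.comp_hasDerivAt q
        ((hasDerivAt_const q u).prodMk (hasDerivAt_id q))
    obtain ⟨B', hB', hB'eq⟩ := ih (B := fun x => (s + 1) * B x + x.2 * dB x)
      ((contDiff_const.mul hB).add (contDiff_snd.mul hdB)) (by omega : i ≤ s)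
    refine ⟨B', hB', fun u q => ?_⟩
    have hfirst : deriv (fun q => q ^ (s + 1) * B (u, q)) =
        fun q => q ^ s * ((s + 1) * B (u, q) + q * dB (u, q)) := by
      ext q
      refine ((hasDerivAt_pow (s + 1) q).mul (hderiv u q)).deriv.trans ?_
      push_cast
      ring
    rw [iteratedDeriv_succ', hfirst, hB'eq, Nat.add_sub_add_right]

theorem Function.Periodic.integral_mul_deriv_eq_neg_deriv_mul {u v u' v' : ℝ → ℝ} {T : ℝ}
    (hu : ∀ x, HasDerivAt u (u' x) x) (hv : ∀ x, HasDerivAt v (v' x) x)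
    (hu' : Continuous u') (hv' : Continuous v')
    (hpu : Function.Periodic u T) (hpv : Function.Periodic v T) (a : ℝ) :
    ∫ x in a..a + T, u x * v' x = -∫ x in a..a + T, u' x * v x := by
  rw [intervalIntegral.integral_mul_deriv_eq_deriv_mul (fun x _ => hu x) (fun x _ => hv x)
    (hu'.intervalIntegrable _ _) (hv'.intervalIntegrable _ _), hpu, hpv]
  ring

theorem Function.Periodic.deriv {F : Type*} [NormedAddCommGroup F] [NormedSpace ℝ F]
    {f : ℝ → F} {T : ℝ} (hf : Function.Periodic f T) :
    Function.Periodic (deriv f) T := fun x => by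
  rw [← deriv_comp_add_const, funext hf]

theorem integral_mul_cos_eq_neg_integral_deriv_deriv_mul_cos {ψ : ℝ → ℝ}
    (hψ : ContDiff ℝ 2 ψ) (hper : Function.Periodic ψ 1) {n : ℕ} (hn : n ≠ 0) (a : ℝ) :
    ∫ u in a..a + 1, ψ u * cos (2 * n * π * u) =
      -(1 / (2 * n * π) ^ 2) * ∫ u in a..a + 1, deriv (deriv ψ) u * cos (2 * n * π * u) := by
  set c : ℝ := 2 * n * π
  have hc : c ≠ 0 := by positivity
  have hperiod : ∀ {g : ℝ → ℝ}, Function.Periodic g (2 * π) →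
      Function.Periodic (fun x => g (c * x)) 1 := by
    intro g hg
    have hc_period : c⁻¹ * (n * (2 * π)) = 1 := by rw [inv_mul_eq_one₀ hc]; ring
    simpa only [hc_period] using (hg.nat_mul n).const_mul c
  obtain ⟨hψd, -, hψ'⟩ := contDiff_succ_iff_deriv (n := 1).mp hψ
  obtain ⟨hψ'd, -, hψ''⟩ := contDiff_succ_iff_deriv (n := 0).mp hψ'
  have hsin : ∀ x, HasDerivAt (fun x => sin (c * x) / c) (cos (c * x)) x := fun x => by
    simpa [hc] using ((hasDerivAt_id x).const_mul c).sin.div_const c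
  have hcos : ∀ x, HasDerivAt (fun x => -cos (c * x) / c) (sin (c * x)) x := fun x => by
    simpa [hc] using ((hasDerivAt_id x).const_mul c).cos.neg.div_const c
  have hibp₁ := hper.integral_mul_deriv_eq_neg_deriv_mul (fun x => (hψd x).hasDerivAt) hsin
    hψ'.continuous (by fun_prop) ((hperiod sin_periodic).comp (· / c)) a
  have hibp₂ := hper.deriv.integral_mul_deriv_eq_neg_deriv_mul (fun x => (hψ'd x).hasDerivAt)
    hcos hψ''.continuous (by fun_prop) ((hperiod cos_periodic).comp (-· / c)) a
  simp only [mul_div_assoc', mul_neg, neg_div, intervalIntegral.integral_neg,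
    intervalIntegral.integral_div] at hibp₁ hibp₂
  rw [hibp₁, hibp₂]
  field_simp

theorem integral_mul_cos_eq_integral_iteratedDeriv_mul_cos {ψ : ℝ → ℝ}
    (hψ : ContDiff ℝ ∞ ψ) (hper : Function.Periodic ψ 1) {n : ℕ} (hn : n ≠ 0) (a : ℝ) (r : ℕ) :
    ∫ u in a..a + 1, ψ u * cos (2 * n * π * u) =
      (-(1 / (2 * n * π) ^ 2)) ^ r *
        ∫ u in a..a + 1, iteratedDeriv (2 * r) ψ u * cos (2 * n * π * u) := by
  induction r generalizing ψ with
  | zero => simp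
  | succ r ih =>
    have hψ'' : ContDiff ℝ ∞ (deriv (deriv ψ)) :=
      contDiff_infty_iff_deriv.mp (contDiff_infty_iff_deriv.mp hψ).2 |>.2
    rw [integral_mul_cos_eq_neg_integral_deriv_deriv_mul_cos (hψ.of_le ENat.LEInfty.out) hper
      hn, ih hψ'' hper.deriv.deriv, mul_add, iteratedDeriv_succ', iteratedDeriv_succ', pow_succ']
    ring

theorem iteratedDeriv_comp_mul_fst {f : ℝ × ℝ → ℝ} (hf : ContDiff ℝ ∞ f) (m : ℕ) (u q : ℝ) :
    iteratedDeriv m (fun u => f (u * q, q)) u =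
      q ^ m * iteratedFDeriv ℝ m f (u * q, q) (fun _ => (1, 0)) := by
  simp_rw [mul_comm _ q]
  rw [congrFun (iteratedDeriv_comp_const_mul (f := fun p => f (p, q))
      ((hf.comp (contDiff_id.prodMk contDiff_const)).of_le ENat.LEInfty.out) q) u,
    iteratedDeriv_comp_fst (hf.of_le ENat.LEInfty.out)]

theorem integral_comp_mul_mul_cos_eq {f : ℝ × ℝ → ℝ} (hf : ContDiff ℝ ∞ f)
    (hinv : ∀ p q, f (p + q, q) = f (p, q)) {n : ℕ} (hn : n ≠ 0) (a : ℝ) (r : ℕ) (q : ℝ) :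
    ∫ u in a..a + 1, f (u * q, q) * cos (2 * n * π * u) =
      (-(1 / (2 * n * π) ^ 2)) ^ r * ∫ u in a..a + 1,
        q ^ (2 * r) * iteratedFDeriv ℝ (2 * r) f (u * q, q) (fun _ => (1, 0)) *
          cos (2 * n * π * u) := by
  have hper : Function.Periodic (fun u => f (u * q, q)) 1 := fun u => by
    simpa [add_mul] using hinv (u * q) q
  rw [integral_mul_cos_eq_integral_iteratedDeriv_mul_cos (by fun_prop) hper hn a r]
  simp_rw [iteratedDeriv_comp_mul_fst hf]

theorem exists_iteratedDeriv_intervalIntegral_pow_mul {B : ℝ × ℝ → ℝ} (hB : ContDiff ℝ ∞ B)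
    {i s : ℕ} (his : i ≤ s) : ∃ B' : ℝ × ℝ → ℝ, Continuous B' ∧
      ∀ g : ℝ → ℝ, ContDiff ℝ ∞ g → ∀ a b q,
        iteratedDeriv i (fun q => ∫ u in a..b, q ^ s * B (u, q) * g u) q =
          q ^ (s - i) * ∫ u in a..b, B' (u, q) * g u := by
  obtain ⟨B', hB', hB'eq⟩ := exists_contDiff_iteratedDeriv_pow_mul hB his
  refine ⟨B', hB'.continuous, fun g hg a b q => ?_⟩
  have hH : ContDiff ℝ ∞ fun x : ℝ × ℝ => x.2 ^ s * B x * g x.1 := by fun_prop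
  have hcomm : ∀ u, (fun q => q ^ s * B (u, q) * g u) = fun q => g u * (q ^ s * B (u, q)) :=
    fun u => funext fun q => mul_comm _ _
  rw [congrFun (iteratedDeriv_intervalIntegral hH a b i) q,
    ← intervalIntegral.integral_const_mul]
  refine intervalIntegral.integral_congr fun u _ => ?_
  simp only [hcomm, iteratedDeriv_const_mul_field, hB'eq]
  ring

theorem exists_iteratedDeriv_integral_comp_mul_mul_cos {f : ℝ × ℝ → ℝ} (hf : ContDiff ℝ ∞ f)
    (hinv : ∀ p q, f (p + q, q) = f (p, q)) {i r : ℕ} (hir : i ≤ 2 * r) :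
    ∃ B : ℝ × ℝ → ℝ, Continuous B ∧ ∀ n : ℕ, n ≠ 0 → ∀ a q,
      iteratedDeriv i (fun q => ∫ u in a..a + 1, f (u * q, q) * cos (2 * n * π * u)) q =
        (-(1 / (2 * n * π) ^ 2)) ^ r *
          (q ^ (2 * r - i) * ∫ u in a..a + 1, B (u, q) * cos (2 * n * π * u)) := by
  have hA : ContDiff ℝ ∞ fun x : ℝ × ℝ =>
      iteratedFDeriv ℝ (2 * r) f (x.1 * x.2, x.2) (fun _ => (1, 0)) := by
    exact (ContinuousMultilinearMap.apply ℝ _ ℝ _).contDiff.comp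
      ((hf.iteratedFDeriv_right (m := ∞) le_rfl).comp
        ((contDiff_fst.mul contDiff_snd).prodMk contDiff_snd))
  obtain ⟨B, hBc, hB⟩ := exists_iteratedDeriv_intervalIntegral_pow_mul hA hir
  refine ⟨B, hBc, fun n hn a q => ?_⟩
  simp_rw [integral_comp_mul_mul_cos_eq hf hinv hn a r, iteratedDeriv_const_mul_field]
  rw [← hB (fun u => cos (2 * n * π * u)) (by fun_prop)]

theorem abs_neg_one_div_sq_pow_le {n : ℕ} (hn : 1 ≤ n) {k r : ℕ} (hkr : k ≤ 2 * r) :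
    |(-(1 / (2 * n * π) ^ 2)) ^ r| ≤ 1 / (n : ℝ) ^ k := by
  have hn' : (1 : ℝ) ≤ n := by exact_mod_cast hn
  rw [abs_pow, abs_neg, abs_of_nonneg (by positivity), div_pow, one_pow, ← pow_mul]
  gcongr
  calc (n : ℝ) ^ k ≤ (n : ℝ) ^ (2 * r) := pow_le_pow_right₀ hn' hkr
    _ ≤ (2 * n * π) ^ (2 * r) := by gcongr; nlinarith [pi_gt_three]

theorem exists_bound_intervalIntegral_mul_cos {B : ℝ × ℝ → ℝ} (hB : Continuous B)
    (a b M : ℝ) :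
    ∃ C, ∀ t q, |q| ≤ M → |∫ u in a..b, B (u, q) * cos (t * u)| ≤ C := by
  obtain ⟨C, hC⟩ := (isCompact_uIcc.prod (isCompact_Icc (a := -M) (b := M))
    ).exists_bound_of_continuousOn hB.continuousOn
  refine ⟨C * |b - a|, fun t q hq => ?_⟩
  rw [← Real.norm_eq_abs]
  refine intervalIntegral.norm_integral_le_of_norm_le_const fun u hu => ?_
  rw [norm_mul, Real.norm_eq_abs (cos _)]
  exact (mul_le_of_le_one_right (norm_nonneg _) (abs_cos_le_one _)).trans
    (hC (u, q) ⟨uIoc_subset_uIcc hu, abs_le.mp hq⟩)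

theorem stmt6 (f : ℝ × ℝ → ℝ) (hf : ContDiff ℝ (⊤ : ℕ∞) f)
    (hinv : ∀ (n : ℤ) (p q : ℝ), f (p + n * q, q) = f (p, q))
    (i k : ℕ) (M : ℝ)
    (α : ℕ → ℝ → ℝ)
    (hα : ∀ (n : ℕ) (q : ℝ), α n q =
      2 * ∫ u in (-(1:ℝ)/2)..(1/2), f (u * q, q) * Real.cos (2 * n * π * u)) :
    ∃ K : ℝ, ∀ n : ℕ, 1 ≤ n → ∀ q : ℝ, |q| < M → q ≠ 0 →
      |iteratedDeriv i (α n) q / q ^ k| ≤ K / (n : ℝ) ^ k := by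
  set r := k + i
  obtain ⟨B, hBc, hB⟩ := exists_iteratedDeriv_integral_comp_mul_mul_cos hf
    (fun p q => by simpa using hinv 1 p q) (i := i) (r := r) (by omega)
  obtain ⟨C, hC⟩ := exists_bound_intervalIntegral_mul_cos hBc (-(1:ℝ)/2) (-(1:ℝ)/2 + 1) M
  refine ⟨2 * max M 1 ^ (k + i) * C, fun n hn q hqM hq0 => ?_⟩
  have hderiv : iteratedDeriv i (α n) q = 2 * ((-(1 / (2 * n * π) ^ 2)) ^ r *
      (q ^ (2 * r - i) * ∫ u in -(1:ℝ)/2..-(1:ℝ)/2 + 1, B (u, q) * cos (2 * n * π * u))) := by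
    rw [funext (hα n), show (1:ℝ)/2 = -(1:ℝ)/2 + 1 by norm_num, iteratedDeriv_const_mul_field,
      hB n (by omega)]
  have hq : |q| ^ (2 * r - i) / |q| ^ k = |q| ^ (k + i) := by
    rw [div_eq_iff (by positivity), ← pow_add]; congr 1; omega
  calc _ = 2 * |(-(1 / (2 * n * π) ^ 2)) ^ r| * (|q| ^ (2 * r - i) / |q| ^ k) *
        |∫ u in -(1:ℝ)/2..-(1:ℝ)/2 + 1, B (u, q) * cos (2 * n * π * u)| := by
        rw [hderiv]; simp only [abs_div, abs_mul, abs_pow, abs_two]; ring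
    _ ≤ 2 * (1 / n ^ k) * max M 1 ^ (k + i) * C := by
        rw [hq]
        gcongr
        · exact abs_neg_one_div_sq_pow_le hn (by omega)
        · exact hqM.le.trans (le_max_left _ _)
        · exact hC _ q hqM.le
    _ = _ := by ring
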